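/- arXiv:1306.3280 — 5 statements merged into one kernel-verified Lean document; each statement's English description precedes it below -/
import Mathlib

section
/- Define the sequence A₀ = 0, A₁ = 1, A_{n+2} = m·A_{n+1} − A_n + 1 for n ≥ 0, where m ≥ 3 is an integer and γ = (m+√(m²−4))/2. Then for all n ≥ 0, A_n = (γ^{2n+1} − γⁿ(1+γ) + 1) / (γ^{n−1}(γ+1)(γ−1)²). -/
/-!
Since `γ² = mγ - 1`, both `γⁿ` and `γ⁻ⁿ` solve the homogeneous recurrence
`xₙ₊₂ = m xₙ₊₁ - xₙ`, and `-γ / (γ - 1)²` is a constant solution of the inhomogeneous one.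
The closed form is the combination of these taking the values `0, 1` at `n = 0, 1`, so it
satisfies the same second-order recurrence with the same initial terms as `A`.
-/

theorem eq_of_two_step_recurrence {α : Type*} {f g : ℕ → α} (step : ℕ → α → α → α)
    (hf : ∀ n, f (n + 2) = step n (f n) (f (n + 1)))
    (hg : ∀ n, g (n + 2) = step n (g n) (g (n + 1)))
    (h0 : f 0 = g 0) (h1 : f 1 = g 1) : f = g := by
  funext n
  induction n using Nat.twoStepInduction with
  | zero => exact h0
  | one => exact h1
  | more n ihn ihn1 => rw [hf, hg, ihn, ihn1]

section ClosedForm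

variable {K : Type*} [Field K] {γ : K}

-- `γ ^ n / γ` stands for the real power `γ ^ ((n : ℝ) - 1)` of the statement.
def closedForm (γ : K) (n : ℕ) : K :=
  (γ ^ (2 * n + 1) - γ ^ n * (1 + γ) + 1) / (γ ^ n / γ * (γ + 1) * (γ - 1) ^ 2)

theorem closedForm_zero : closedForm γ 0 = 0 := by
  simp [closedForm]

theorem closedForm_one (h0 : γ ≠ 0) (hp : γ + 1 ≠ 0) (hm : γ - 1 ≠ 0) :
    closedForm γ 1 = 1 := by
  rw [closedForm, div_eq_one_iff_eq (by simp [h0, hp, hm])]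
  field_simp
  ring

theorem closedForm_add_two {m : K} (hγ : γ ^ 2 = m * γ - 1)
    (h0 : γ ≠ 0) (hp : γ + 1 ≠ 0) (hm : γ - 1 ≠ 0) (n : ℕ) :
    closedForm γ (n + 2) = m * closedForm γ (n + 1) - closedForm γ n + 1 := by
  simp only [closedForm, show 2 * (n + 2) + 1 = n + n + 5 by ring,
    show 2 * (n + 1) + 1 = n + n + 3 by ring, show 2 * n + 1 = n + n + 1 by ring, pow_add]
  field_simp
  linear_combination (1 - γ * γ ^ n - γ ^ 2 * γ ^ n + γ ^ 3 * (γ ^ n) ^ 2) * hγ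

end ClosedForm

section LargerRoot

variable {m γ : ℝ}

theorem sq_eq_of_eq_larger_root (hm : 2 ≤ m) (hγ : γ = (m + √(m ^ 2 - 4)) / 2) :
    γ ^ 2 = m * γ - 1 := by
  have hs : √(m ^ 2 - 4) ^ 2 = m ^ 2 - 4 := Real.sq_sqrt (by nlinarith)
  rw [hγ]
  linear_combination (1 / 4 : ℝ) * hs

theorem one_lt_of_eq_larger_root (hm : 2 < m) (hγ : γ = (m + √(m ^ 2 - 4)) / 2) :
    1 < γ := by
  have := Real.sqrt_nonneg (m ^ 2 - 4)
  rw [hγ]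
  linarith

end LargerRoot

theorem stmt_1 (m : ℕ) (hm : 3 ≤ m) (γ : ℝ)
    (hγ : γ = ((m : ℝ) + Real.sqrt ((m : ℝ)^2 - 4)) / 2)
    (A : ℕ → ℝ) (hA0 : A 0 = 0) (hA1 : A 1 = 1)
    (hArec : ∀ n : ℕ, A (n + 2) = (m : ℝ) * A (n + 1) - A n + 1) :
    ∀ n : ℕ, A n =
      (γ ^ (2 * n + 1) - γ ^ n * (1 + γ) + 1) /
        (γ ^ ((n : ℝ) - 1) * (γ + 1) * (γ - 1)^2) := by
  have hm' : (3 : ℝ) ≤ m := by exact_mod_cast hm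
  have hγ1 : 1 < γ := one_lt_of_eq_larger_root (by linarith) hγ
  have hsq : γ ^ 2 = m * γ - 1 := sq_eq_of_eq_larger_root (by linarith) hγ
  have h0 : γ ≠ 0 := by positivity
  have hp : γ + 1 ≠ 0 := by positivity
  have hm1 : γ - 1 ≠ 0 := sub_ne_zero.mpr hγ1.ne'
  have hA : A = closedForm γ :=
    eq_of_two_step_recurrence (fun _ a b => (m : ℝ) * b - a + 1) hArec
      (closedForm_add_two hsq h0 hp hm1) (by rw [hA0, closedForm_zero])
      (by rw [hA1, closedForm_one h0 hp hm1])
  intro n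
  rw [hA, closedForm, Real.rpow_sub_one h0, Real.rpow_natCast]
end

section
/- Let ρ = (α₁ + α₂)/(2 − m) with m ≥ 3, and let A_n be defined by A₀ = 0, A₁ = 1, A_{n+2} = mA_{n+1} − A_n + 1. Then for all n ≥ 0: r₁(r₂r₁)ⁿρ − ρ = −A_{2n+1}α₁ − A_{2n}α₂ and (r₁r₂)^{n+1}ρ − ρ = −A_{2n+2}α₁ − A_{2n+1}α₂. -/
theorem stmt_9 (m : ℕ) (hm : 3 ≤ m)
    (r1 r2 : ℝ × ℝ → ℝ × ℝ)
    (hr1 : ∀ v : ℝ × ℝ, r1 v = (-v.1 + (m : ℝ) * v.2, v.2))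
    (hr2 : ∀ v : ℝ × ℝ, r2 v = (v.1, (m : ℝ) * v.1 - v.2))
    (A : ℕ → ℝ) (hA0 : A 0 = 0) (hA1 : A 1 = 1)
    (hArec : ∀ n : ℕ, A (n + 2) = (m : ℝ) * A (n + 1) - A n + 1)
    (ρ : ℝ × ℝ) (hρ : ρ = (1 / (2 - (m : ℝ)), 1 / (2 - (m : ℝ)))) :
    ∀ n : ℕ,
      r1 ((r2 ∘ r1)^[n] ρ) - ρ = (-A (2 * n + 1), -A (2 * n)) ∧
      (r1 ∘ r2)^[n + 1] ρ - ρ = (-A (2 * n + 2), -A (2 * n + 1)) := by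
  have hm3 : (3 : ℝ) ≤ (m : ℝ) := by exact_mod_cast hm
  have hne : (2 : ℝ) - (m : ℝ) ≠ 0 := by nlinarith
  set c : ℝ := 1 / (2 - (m : ℝ)) with hc
  have hc2 : (2 - (m : ℝ)) * c = 1 := by rw [hc]; field_simp
  have hstep : ∀ a b : ℝ,
      r1 (r2 (c - a, c - b))
        = (c - ((m : ℝ) * ((m : ℝ) * a - b + 1) - a + 1), c - ((m : ℝ) * a - b + 1)) := by
    intro a b
    rw [hr2, hr1]
    simp only [Prod.mk.injEq]
    refine ⟨?_, ?_⟩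
    · linear_combination (-(m : ℝ) - 1) * hc2
    · linear_combination (-1 : ℝ) * hc2
  intro n
  induction n with
  | zero =>
    constructor
    · simp only [Function.iterate_zero, id_eq, hρ, hr1]
      rw [hA0, hA1]
      rw [Prod.mk_sub_mk, Prod.mk.injEq]
      refine ⟨?_, ?_⟩
      · linear_combination (-1 : ℝ) * hc2
      · ring
    · simp only [zero_add, Function.iterate_one, Function.comp_apply]
      have := hstep 0 0
      simp only [sub_zero] at this
      rw [hρ, this, hArec 0, hA0, hA1]
      rw [Prod.mk_sub_mk, Prod.mk.injEq]
      constructor <;> ring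
  | succ k ih =>
    obtain ⟨ih1, ih2⟩ := ih
    have h1 : r1 ((r2 ∘ r1)^[k] ρ) = (c - A (2 * k + 1), c - A (2 * k)) := by
      have := sub_eq_iff_eq_add.mp ih1
      rw [this, hρ, Prod.mk_add_mk]
      simp [sub_eq_neg_add]
    have h2 : (r1 ∘ r2)^[k + 1] ρ = (c - A (2 * k + 2), c - A (2 * k + 1)) := by
      have := sub_eq_iff_eq_add.mp ih2
      rw [this, hρ, Prod.mk_add_mk]
      simp [sub_eq_neg_add]
    constructor
    · have : r1 ((r2 ∘ r1)^[k + 1] ρ) = r1 (r2 (r1 ((r2 ∘ r1)^[k] ρ))) := by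
        rw [Function.iterate_succ_apply']
        simp [Function.comp]
      rw [this, h1, hstep]
      rw [show 2 * (k + 1) + 1 = (2 * k + 1) + 2 by ring,
          show 2 * (k + 1) = 2 * k + 2 by ring,
          hArec (2 * k + 1), hArec (2 * k), hρ]
      rw [Prod.mk_sub_mk, Prod.mk.injEq]
      constructor <;> ring
    · have : (r1 ∘ r2)^[k + 1 + 1] ρ = r1 (r2 ((r1 ∘ r2)^[k + 1] ρ)) := by
        rw [Function.iterate_succ_apply']
        simp [Function.comp]
      rw [this, h2, hstep]
      rw [show 2 * (k + 1) + 2 = (2 * k + 2) + 2 by ring,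
          show 2 * (k + 1) + 1 = (2 * k + 1) + 2 by ring,
          hArec (2 * k + 2), hArec (2 * k + 1), hρ]
      rw [Prod.mk_sub_mk, Prod.mk.injEq]
      constructor <;> ring
end

section
/- Let m ≥ 3 and γ = (m+√(m²−4))/2. If real numbers s₁, s₂ satisfy 2s₁ − ms₂ < −2 and 2s₂ − ms₁ < −2, then γs₂ − s₁ > 2γ/(γ−1). -/
theorem stmt_10 (m : ℕ) (hm : 3 ≤ m) (γ : ℝ)
    (hγ : γ = ((m : ℝ) + Real.sqrt ((m : ℝ)^2 - 4)) / 2)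
    (s₁ s₂ : ℝ) (h1 : 2 * s₁ - (m : ℝ) * s₂ < -2) (h2 : 2 * s₂ - (m : ℝ) * s₁ < -2) :
    γ * s₂ - s₁ > 2 * γ / (γ - 1) := by
  have hm2 : (3:ℝ) ≤ (m:ℝ) := by exact_mod_cast hm
  have hnn : (0:ℝ) ≤ (m:ℝ)^2 - 4 := by nlinarith
  have hr : Real.sqrt ((m:ℝ)^2 - 4) ^ 2 = (m:ℝ)^2 - 4 := Real.sq_sqrt hnn
  have hr0 : 0 < Real.sqrt ((m:ℝ)^2 - 4) := Real.sqrt_pos.2 (by nlinarith)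
  have hγ1 : 1 < γ := by rw [hγ]; nlinarith
  have hq : γ^2 = (m:ℝ) * γ - 1 := by rw [hγ]; linear_combination hr / 4
  have hb : 0 < 2*γ - (m:ℝ) := by rw [hγ]; linarith
  have ha : 0 < γ * (m:ℝ) - 2 := by nlinarith
  have hp1 : 0 < (m:ℝ) * s₂ - 2*s₁ - 2 := by linarith
  have hp2 : 0 < (m:ℝ) * s₁ - 2*s₂ - 2 := by linarith
  have h4 : 0 < (m:ℝ)^2 - 4 := by nlinarith
  have hbig : 0 < (γ - 1) * ((γ*(m:ℝ) - 2) * ((m:ℝ)*s₂ - 2*s₁ - 2)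
      + (2*γ - (m:ℝ)) * ((m:ℝ)*s₁ - 2*s₂ - 2)) := mul_pos (by linarith) (add_pos (mul_pos ha hp1) (mul_pos hb hp2))
  have hkey : ((m:ℝ)^2 - 4) * ((γ * s₂ - s₁) * (γ - 1) - 2*γ)
      = (γ - 1) * ((γ*(m:ℝ) - 2) * ((m:ℝ)*s₂ - 2*s₁ - 2)
      + (2*γ - (m:ℝ)) * ((m:ℝ)*s₁ - 2*s₂ - 2)) := by
    linear_combination (2*(m:ℝ) + 4) * hq
  rw [gt_iff_lt, div_lt_iff₀ (by linarith : (0:ℝ) < γ - 1)]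
  nlinarith [hkey, hbig, h4]
end

section
/- For real s < −1 − 1/γ (where γ = (m+√(m²−4))/2, m ≥ 3), the quantity (−s−1)·B_{i+1} − B_i tends to infinity as i → ∞, where B_n = (γ^{2n}−1)/(γ^{n−1}(γ²−1)). -/
open Filter Topology

/-!
Clearing the real power, `B n = (γ^(n+1) - γ^(1-n)) / (γ^2 - 1)`, so
`c B (i+1) - B i = ((c γ - 1) γ^(i+1) + γ^(1-i) (1 - c/γ)) / (γ^2 - 1)` with `c = -s - 1`.
The hypothesis on `s` is exactly `c γ > 1`, so the first term grows like `γ^i` while the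
second tends to `0`.
-/

lemma one_lt_add_sqrt_sq_sub_four_div_two {m : ℝ} (hm : 2 < m) :
    1 < (m + Real.sqrt (m ^ 2 - 4)) / 2 := by
  have := Real.sqrt_nonneg (m ^ 2 - 4)
  linarith

lemma pow_two_mul_sub_one_div_rpow_sub_one {γ : ℝ} (hγ : 0 < γ) (n : ℕ) :
    (γ ^ (2 * n) - 1) / γ ^ ((n : ℝ) - 1) = γ ^ (n + 1) - γ * γ⁻¹ ^ n := by
  rw [Real.rpow_sub hγ, Real.rpow_natCast, Real.rpow_one, inv_pow]
  field_simp
  ring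

lemma tendsto_mul_pow_sub_inv_pow_atTop {γ c : ℝ} (hγ : 1 < γ) (hc : 1 < c * γ) :
    Tendsto (fun i : ℕ => c * (γ ^ (i + 2) - γ * γ⁻¹ ^ (i + 1)) - (γ ^ (i + 1) - γ * γ⁻¹ ^ i))
      atTop atTop := by
  have h_pow : Tendsto (fun i : ℕ => (c * γ - 1) * γ ^ (i + 1)) atTop atTop :=
    ((tendsto_pow_atTop_atTop_of_one_lt hγ).comp (tendsto_add_atTop_nat 1)).const_mul_atTop
      (by linarith)
  have h_inv : Tendsto (fun i : ℕ => γ * (1 - c * γ⁻¹) * γ⁻¹ ^ i) atTop (𝓝 0) := by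
    simpa using (tendsto_pow_atTop_nhds_zero_of_lt_one (by positivity)
      (inv_lt_one_of_one_lt₀ hγ)).const_mul (γ * (1 - c * γ⁻¹))
  refine (h_pow.atTop_add h_inv).congr fun i => ?_
  ring

theorem stmt_13 (m : ℕ) (hm : 3 ≤ m) (γ : ℝ)
    (hγ : γ = ((m : ℝ) + Real.sqrt ((m : ℝ)^2 - 4)) / 2)
    (B : ℕ → ℝ)
    (hB : ∀ n : ℕ, B n = (γ ^ (2 * n) - 1) / (γ ^ ((n : ℝ) - 1) * (γ^2 - 1)))
    (s : ℝ) (hs : s < -1 - 1 / γ) :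
    Filter.Tendsto (fun i : ℕ => (-s - 1) * B (i + 1) - B i)
      Filter.atTop Filter.atTop := by
  have hγ1 : 1 < γ := hγ ▸ one_lt_add_sqrt_sq_sub_four_div_two (by exact_mod_cast hm)
  have hc : 1 < (-s - 1) * γ := by
    rw [← div_lt_iff₀ (by positivity)]
    linarith
  have hB' : ∀ n : ℕ, B n = (γ ^ (n + 1) - γ * γ⁻¹ ^ n) / (γ ^ 2 - 1) := fun n => by
    rw [hB, ← div_div, pow_two_mul_sub_one_div_rpow_sub_one (by positivity)]
  refine ((tendsto_mul_pow_sub_inv_pow_atTop hγ1 hc).atTop_div_const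
    (by nlinarith : (0 : ℝ) < γ ^ 2 - 1)).congr fun i => ?_
  simp only [hB']
  ring
end

section
/- For Re s > 1, n a nonzero integer, and y > 0: ∫_{−∞}^{∞} (1+x²)^{−s/2} e^{−2πi n y x} dx = 2 π^{s/2} Γ(s/2)^{−1} |ny|^{(s−1)/2} K_{(s−1)/2}(2π|n|y), where K_s(y) = (1/2)∫₀^∞ e^{−y(t+t^{-1})/2} t^s dt/t is the K-Bessel function. -/
/-!
Write `(1 + x²)^(-s/2) = Γ(s/2)⁻¹ ∫₀^∞ u^(s/2 - 1) e^(-(1 + x²) u) du` and exchange the order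
of integration; this is legitimate because the absolute values integrate to
`Γ(Re s / 2) (1 + x²)^(-Re s / 2)`, integrable in `x` exactly when `Re s > 1`. The inner
integral over `x` is the Fourier transform of a Gaussian, which leaves
`π^(1/2) Γ(s/2)⁻¹ ∫₀^∞ u^((s-1)/2 - 1) e^(-u - (π ξ)² / u) du` at frequency `ξ = n y`, and
the substitution `u = π |ξ| t` turns this into the integral defining `K_{(s-1)/2}(2π|ξ|)`.
-/

open Real MeasureTheory

noncomputable def KBessel (s : ℂ) (y : ℝ) : ℂ :=
  (1 / 2) * ∫ t in Set.Ioi (0 : ℝ), Complex.exp (-(y * (t + t⁻¹) / 2)) * (t : ℂ) ^ (s - 1)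

open Complex Set

lemma integrableOn_cpow_mul_exp_neg_mul {a : ℂ} (ha : 0 < a.re) {r : ℝ} (hr : 0 < r) :
    IntegrableOn (fun u : ℝ ↦ (u : ℂ) ^ (a - 1) * cexp (-(r * u))) (Ioi 0) := by
  refine (integrableOn_rpow_mul_exp_neg_mul_rpow (p := 1) (by linarith : -1 < a.re - 1) one_pos
    hr).mono' (by fun_prop : Measurable _).aestronglyMeasurable ?_
  filter_upwards [ae_restrict_mem measurableSet_Ioi] with u hu
  rw [norm_mul, norm_cpow_eq_rpow_re_of_pos hu, Complex.norm_exp]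
  simp

lemma ofReal_cpow_neg_eq_inv_Gamma_mul_integral {a : ℂ} (ha : 0 < a.re) {r : ℝ} (hr : 0 < r) :
    (r : ℂ) ^ (-a) =
      (Gamma a)⁻¹ * ∫ u in Ioi (0 : ℝ), (u : ℂ) ^ (a - 1) * cexp (-(r * u)) := by
  rw [integral_cpow_mul_exp_neg_mul_Ioi ha hr, one_div, inv_cpow_ofReal_nonneg hr.le, cpow_neg,
    mul_comm _ (Gamma a), inv_mul_cancel_left₀ (Gamma_ne_zero_of_re_pos ha)]

lemma integral_norm_cpow_mul_exp_neg_mul {a : ℂ} (ha : 0 < a.re) {r : ℝ} (hr : 0 < r) :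
    ∫ u in Ioi (0 : ℝ), ‖(u : ℂ) ^ (a - 1) * cexp (-(r * u))‖
      = (1 / r) ^ a.re * Real.Gamma a.re := by
  rw [← integral_rpow_mul_exp_neg_mul_Ioi ha hr]
  refine setIntegral_congr_fun measurableSet_Ioi fun u hu ↦ ?_
  rw [norm_mul, norm_cpow_eq_rpow_re_of_pos hu, Complex.norm_exp]
  simp

lemma integrable_fourier_mul_cpow_mul_exp_neg_one_add_sq {a : ℂ} (ha : 1 / 2 < a.re) (ξ : ℝ) :
    Integrable (Function.uncurry fun x u : ℝ ↦
        cexp (-(2 * π * I * ξ * x)) * ((u : ℂ) ^ (a - 1) * cexp (-((1 + x ^ 2 : ℝ) * u))))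
      (volume.prod (volume.restrict (Ioi 0))) := by
  have ha₀ : 0 < a.re := by linarith
  refine (integrable_prod_iff (by fun_prop : Measurable _).aestronglyMeasurable).2
    ⟨ae_of_all _ fun x ↦ (integrableOn_cpow_mul_exp_neg_mul (r := 1 + x ^ 2) ha₀
      (by positivity)).const_mul (cexp (-(2 * π * I * ξ * x))), ?_⟩
  have hnorm (x : ℝ) : ∫ u in Ioi (0 : ℝ), ‖cexp (-(2 * π * I * ξ * x)) *
      ((u : ℂ) ^ (a - 1) * cexp (-((1 + x ^ 2 : ℝ) * u)))‖
      = Real.Gamma a.re * (1 + ‖x‖ ^ 2) ^ (-(2 * a.re) / 2) := by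
    have hx : (0 : ℝ) < 1 + x ^ 2 := by positivity
    have hphase : ‖cexp (-(2 * π * I * ξ * x))‖ = 1 := by
      rw [Complex.norm_exp]
      simp
    simp_rw [norm_mul (cexp _), hphase, one_mul]
    rw [integral_norm_cpow_mul_exp_neg_mul ha₀ hx, Real.norm_eq_abs, sq_abs, one_div,
      Real.inv_rpow hx.le, ← Real.rpow_neg hx.le, mul_comm]
    congr 2
    ring
  simp only [Function.uncurry_apply_pair, hnorm]
  exact (integrable_rpow_neg_one_add_norm_sq (by simp; linarith)).const_mul _

lemma integral_fourier_mul_cexp_neg_one_add_sq_mul {u : ℝ} (hu : 0 < u) (ξ : ℝ) :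
    ∫ x : ℝ, cexp (-(2 * π * I * ξ * x)) * cexp (-((1 + x ^ 2 : ℝ) * u))
      = π ^ (1 / 2 : ℂ) * (u : ℂ) ^ (-(1 / 2 : ℂ)) * cexp (-(u + (π * ξ) ^ 2 / u)) := by
  have hu' : (u : ℂ) ≠ 0 := ofReal_ne_zero.2 hu.ne'
  have hsplit (x : ℝ) : cexp (-(2 * π * I * ξ * x)) * cexp (-((1 + x ^ 2 : ℝ) * u))
      = cexp (-u) * (cexp (I * ↑(-(2 * π * ξ)) * x) * cexp (-u * x ^ 2)) := by
    simp only [← Complex.exp_add]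
    congr 1
    push_cast
    ring
  simp_rw [hsplit]
  rw [integral_const_mul, fourierIntegral_gaussian (by simpa using hu),
    div_cpow_ofReal_nonneg pi_pos.le hu.le, cpow_neg, neg_add, Complex.exp_add,
    show -(↑(-(2 * π * ξ)) : ℂ) ^ 2 / (4 * u) = -((π * ξ) ^ 2 / u) by
      push_cast
      field_simp
      ring]
  ring

theorem integral_one_add_sq_cpow_neg_mul_fourier_eq_integral {a : ℂ} (ha : 1 / 2 < a.re)
    (ξ : ℝ) :
    ∫ x : ℝ, ((1 + x ^ 2 : ℝ) : ℂ) ^ (-a) * cexp (-(2 * π * I * ξ * x))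
      = (Gamma a)⁻¹ * π ^ (1 / 2 : ℂ) *
          ∫ u in Ioi (0 : ℝ), (u : ℂ) ^ (a - 1 / 2 - 1) * cexp (-(u + (π * ξ) ^ 2 / u)) := by
  have ha₀ : 0 < a.re := by linarith
  calc _ = ∫ x : ℝ, (Gamma a)⁻¹ * ∫ u in Ioi (0 : ℝ), cexp (-(2 * π * I * ξ * x)) *
          ((u : ℂ) ^ (a - 1) * cexp (-((1 + x ^ 2 : ℝ) * u))) := by
        congr with x
        rw [ofReal_cpow_neg_eq_inv_Gamma_mul_integral ha₀ (by positivity), mul_assoc,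
          mul_comm _ (cexp _), ← integral_const_mul]
    _ = (Gamma a)⁻¹ * ∫ u in Ioi (0 : ℝ), ∫ x : ℝ, cexp (-(2 * π * I * ξ * x)) *
          ((u : ℂ) ^ (a - 1) * cexp (-((1 + x ^ 2 : ℝ) * u))) := by
        rw [integral_const_mul,
          integral_integral_swap (integrable_fourier_mul_cpow_mul_exp_neg_one_add_sq ha ξ)]
    _ = (Gamma a)⁻¹ * ∫ u in Ioi (0 : ℝ), π ^ (1 / 2 : ℂ) *
          ((u : ℂ) ^ (a - 1 / 2 - 1) * cexp (-(u + (π * ξ) ^ 2 / u))) := by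
        congr 1
        refine setIntegral_congr_fun measurableSet_Ioi fun u hu ↦ ?_
        have hu' : (u : ℂ) ≠ 0 := ofReal_ne_zero.2 (ne_of_gt hu)
        simp_rw [mul_left_comm (cexp _) ((u : ℂ) ^ (a - 1))]
        rw [integral_const_mul, integral_fourier_mul_cexp_neg_one_add_sq_mul hu,
          show a - 1 / 2 - 1 = (a - 1) + -(1 / 2) by ring, cpow_add _ _ hu']
        ring
    _ = _ := by
        rw [integral_const_mul]
        ring

lemma integral_cpow_mul_cexp_neg_add_sq_div_eq_KBessel (ν : ℂ) {c : ℝ} (hc : 0 < c) :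
    ∫ u in Ioi (0 : ℝ), (u : ℂ) ^ (ν - 1) * cexp (-(u + c ^ 2 / u))
      = 2 * (c : ℂ) ^ ν * KBessel ν (2 * c) := by
  have hc' : (c : ℂ) ≠ 0 := ofReal_ne_zero.2 hc.ne'
  have hscale : ∀ t ∈ Ioi (0 : ℝ),
      ((c * t : ℝ) : ℂ) ^ (ν - 1) * cexp (-((c * t : ℝ) + c ^ 2 / (c * t : ℝ)))
        = (c : ℂ) ^ (ν - 1) *
            (cexp (-((2 * c : ℝ) * (t + (t⁻¹ : ℝ)) / 2)) * (t : ℂ) ^ (ν - 1)) := by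
    intro t ht
    have ht' : (t : ℂ) ≠ 0 := ofReal_ne_zero.2 (ne_of_gt ht)
    rw [ofReal_mul, mul_cpow_ofReal_nonneg hc.le (le_of_lt ht),
      show -((c : ℂ) * t + c ^ 2 / (c * t)) = -((2 * c : ℝ) * (t + (t⁻¹ : ℝ)) / 2) by
        push_cast
        field_simp]
    ring
  have hsub := integral_comp_mul_left_Ioi
    (fun u : ℝ ↦ (u : ℂ) ^ (ν - 1) * cexp (-(u + c ^ 2 / u))) 0 hc
  rw [mul_zero, setIntegral_congr_fun measurableSet_Ioi hscale, integral_const_mul,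
    eq_inv_smul_iff₀ hc.ne'] at hsub
  rw [← hsub, KBessel, real_smul, cpow_sub _ _ hc', cpow_one]
  field_simp

theorem integral_one_add_sq_cpow_neg_mul_fourier_eq_KBessel {s : ℂ} (hs : 1 < s.re) {ξ : ℝ}
    (hξ : ξ ≠ 0) :
    ∫ x : ℝ, ((1 + x ^ 2 : ℝ) : ℂ) ^ (-(s / 2)) * cexp (-(2 * π * I * ξ * x))
      = 2 * π ^ (s / 2) * (Gamma (s / 2))⁻¹ * ((|ξ| : ℝ) : ℂ) ^ ((s - 1) / 2) *
          KBessel ((s - 1) / 2) (2 * (π * |ξ|)) := by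
  have hsq : ((π : ℂ) * ξ) ^ 2 = ((π * |ξ| : ℝ) : ℂ) ^ 2 := by
    rw [ofReal_mul, mul_pow, mul_pow, ← ofReal_pow |ξ|, sq_abs, ofReal_pow]
  have hπ : (π : ℂ) ^ (s / 2) = π ^ (1 / 2 : ℂ) * π ^ ((s - 1) / 2) := by
    rw [← cpow_add _ _ (ofReal_ne_zero.2 pi_ne_zero)]
    ring_nf
  rw [integral_one_add_sq_cpow_neg_mul_fourier_eq_integral (by simp; linarith) ξ,
    show s / 2 - 1 / 2 - 1 = (s - 1) / 2 - 1 by ring, hsq,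
    integral_cpow_mul_cexp_neg_add_sq_div_eq_KBessel _ (mul_pos pi_pos (abs_pos.2 hξ)),
    ofReal_mul, mul_cpow_ofReal_nonneg pi_pos.le (abs_nonneg ξ), hπ]
  ring

theorem stmt_16 (s : ℂ) (hs : 1 < s.re) (n : ℤ) (hn : n ≠ 0) (y : ℝ) (hy : 0 < y) :
    ∫ x : ℝ, ((1 + x ^ 2 : ℝ) : ℂ) ^ (-s / 2) *
        Complex.exp (-(2 * (π : ℂ) * Complex.I * (n : ℂ) * (y : ℂ) * (x : ℂ)))
      = 2 * (π : ℂ) ^ (s / 2) * (Complex.Gamma (s / 2))⁻¹ *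
          ((|(n : ℝ) * y| : ℝ) : ℂ) ^ ((s - 1) / 2) *
          KBessel ((s - 1) / 2) (2 * π * |(n : ℝ)| * y) := by
  have hξ : (n : ℝ) * y ≠ 0 := mul_ne_zero (Int.cast_ne_zero.2 hn) hy.ne'
  have hintegrand (x : ℝ) : ((1 + x ^ 2 : ℝ) : ℂ) ^ (-s / 2) *
      cexp (-(2 * (π : ℂ) * I * (n : ℂ) * (y : ℂ) * (x : ℂ)))
      = ((1 + x ^ 2 : ℝ) : ℂ) ^ (-(s / 2)) *
          cexp (-(2 * π * I * ((n * y : ℝ) : ℂ) * x)) := by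
    push_cast
    ring_nf
  rw [show 2 * π * |(n : ℝ)| * y = 2 * (π * |(n : ℝ) * y|) by
    rw [abs_mul, abs_of_pos hy]
    ring]
  simp_rw [hintegrand]
  exact integral_one_add_sq_cpow_neg_mul_fourier_eq_KBessel hs hξ
end
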